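/- Let s ≥ 1 be real. There exists C = C(s) > 0 such that for all integers ξ, η, | |ξ|^s ξ η − |ξ−η|^s (ξ−η) η − |η|^s η² − (s+1)(ξ−η)|η|^s η | ≤ C ( |ξ−η|^s |η|² + |ξ−η|² |η|^s ). -/
import Mathlib


open Real

lemma bern (p : ℝ) (hp : 1 ≤ p) {x y : ℝ} (hx : 0 < x) (hy : 0 ≤ y) :
    x ^ p + p * x ^ (p - 1) * (y - x) ≤ y ^ p := by
  have h := one_add_mul_self_le_rpow_one_add (s := y / x - 1)
    (by have := div_nonneg hy hx.le; linarith) hp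
  rw [show (1 : ℝ) + (y / x - 1) = y / x by ring] at h
  have hxp : (0 : ℝ) < x ^ p := Real.rpow_pos_of_pos hx p
  have h3 : (y / x) ^ p = y ^ p / x ^ p := Real.div_rpow hy hx.le p
  rw [h3] at h
  have h4 := mul_le_mul_of_nonneg_right h hxp.le
  rw [div_mul_cancel₀ _ hxp.ne'] at h4
  have e1 : x ^ (p - 1) * x = x ^ p := by
    rw [← Real.rpow_add_one hx.ne']; ring_nf
  calc x ^ p + p * x ^ (p - 1) * (y - x)
      = (1 + p * (y / x - 1)) * x ^ p := by
        field_simp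
        rw [← e1]; ring
    _ ≤ y ^ p := h4

lemma rpow_sub_rpow_le' {p x y : ℝ} (hp : 1 ≤ p) (hy : 0 ≤ y) (hxy : y ≤ x) (hx : 0 < x) :
    x ^ p - y ^ p ≤ p * x ^ (p - 1) * (x - y) := by
  have := bern p hp hx hy; linarith

lemma liph (s : ℝ) (hs : 1 ≤ s) {x y : ℝ} (hxy : |y| ≤ |x|) :
    |(|x| ^ s * x - |y| ^ s * y)| ≤ (s + 1) * |x| ^ s * |x - y| := by
  rcases eq_or_lt_of_le (abs_nonneg x) with h0 | h0
  · have hx : x = 0 := by rwa [eq_comm, abs_eq_zero] at h0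
    have hy : y = 0 := by
      have := abs_nonneg y; rw [← h0] at hxy; have : |y| = 0 := le_antisymm hxy this
      rwa [abs_eq_zero] at this
    simp [hx, hy]
  have key : |x| ^ s - |y| ^ s ≤ s * |x| ^ (s - 1) * (|x| - |y|) :=
    rpow_sub_rpow_le' hs (abs_nonneg y) hxy h0
  have hnn : 0 ≤ |x| ^ s - |y| ^ s := by
    have := Real.rpow_le_rpow (abs_nonneg y) hxy (by linarith : (0:ℝ) ≤ s); linarith
  have e1 : |x| ^ (s - 1) * |x| = |x| ^ s := by
    rw [← Real.rpow_add_one h0.ne']; ring_nf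
  have hd : |x| ^ s * x - |y| ^ s * y = |x| ^ s * (x - y) + (|x| ^ s - |y| ^ s) * y := by ring
  have habs2 : |(|x| ^ s * x - |y| ^ s * y)| ≤ |x| ^ s * |x - y| + (|x| ^ s - |y| ^ s) * |y| := by
    rw [hd]
    refine (abs_add_le _ _).trans (add_le_add ?_ ?_)
    · rw [abs_mul, abs_of_nonneg (Real.rpow_nonneg (abs_nonneg x) s)]
    · rw [abs_mul, abs_of_nonneg hnn]
  have h2 : (|x| ^ s - |y| ^ s) * |y| ≤ s * |x| ^ s * |x - y| := by
    have hsub : |x| - |y| ≤ |x - y| := abs_sub_abs_le_abs_sub x y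
    have c1 : (|x| ^ s - |y| ^ s) * |y| ≤ (s * |x| ^ (s - 1) * (|x| - |y|)) * |x| := by
      exact mul_le_mul key hxy (abs_nonneg y)
        (mul_nonneg (by positivity) (sub_nonneg.mpr hxy))
    have c2 : (s * |x| ^ (s - 1) * (|x| - |y|)) * |x| = s * |x| ^ s * (|x| - |y|) := by
      rw [← e1]; ring
    have c3 : s * |x| ^ s * (|x| - |y|) ≤ s * |x| ^ s * |x - y| := by
      apply mul_le_mul_of_nonneg_left hsub; positivity
    linarith
  nlinarith [abs_nonneg (x - y), Real.rpow_nonneg (abs_nonneg x) s]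

lemma lip (s : ℝ) (hs : 1 ≤ s) (x y : ℝ) :
    |(|x| ^ s * x - |y| ^ s * y)| ≤ (s + 1) * (max |x| |y|) ^ s * |x - y| := by
  rcases le_total |y| |x| with h | h
  · rw [max_eq_left h]; exact liph s hs h
  · rw [max_eq_right h]
    calc |(|x| ^ s * x - |y| ^ s * y)| = |(|y| ^ s * y - |x| ^ s * x)| := abs_sub_comm _ _
      _ ≤ (s + 1) * |y| ^ s * |y - x| := liph s hs h
      _ = (s + 1) * |y| ^ s * |x - y| := by rw [abs_sub_comm]

lemma key2 (s : ℝ) (hs : 1 ≤ s) {u v : ℝ} (hu : 0 < u) (hv : 0 < v) (huv : u ≤ 2 * v) :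
    |u ^ (s + 1) - v ^ (s + 1) - (s + 1) * v ^ s * (u - v)|
      ≤ (s + 1) * s * 2 ^ s * v ^ (s - 1) * (u - v) ^ 2 := by
  have hs1 : 1 ≤ s + 1 := by linarith
  have e : s + 1 - 1 = s := by ring
  -- lower bound: convexity
  have hlow := bern (s + 1) hs1 hv hu.le
  rw [e] at hlow
  have hlow' : 0 ≤ u ^ (s + 1) - v ^ (s + 1) - (s + 1) * v ^ s * (u - v) := by linarith
  rw [abs_of_nonneg hlow']
  rcases le_total v u with h | h
  · -- u ≥ v
    have h1 := rpow_sub_rpow_le' hs1 hv.le h hu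
    rw [e] at h1
    have h2 := rpow_sub_rpow_le' hs hv.le h hu
    have h3 : u ^ (s - 1) ≤ 2 ^ s * v ^ (s - 1) := by
      calc u ^ (s - 1) ≤ (2 * v) ^ (s - 1) :=
            Real.rpow_le_rpow hu.le huv (by linarith)
        _ = 2 ^ (s - 1) * v ^ (s - 1) := Real.mul_rpow (by norm_num) hv.le
        _ ≤ 2 ^ s * v ^ (s - 1) := by
            have : (2:ℝ) ^ (s - 1) ≤ 2 ^ s :=
              Real.rpow_le_rpow_of_exponent_le (by norm_num) (by linarith)
            exact mul_le_mul_of_nonneg_right this (by positivity)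
    have huv0 : 0 ≤ u - v := by linarith
    calc u ^ (s + 1) - v ^ (s + 1) - (s + 1) * v ^ s * (u - v)
        ≤ (s + 1) * u ^ s * (u - v) - (s + 1) * v ^ s * (u - v) := by linarith
      _ = (s + 1) * ((u ^ s - v ^ s) * (u - v)) := by ring
      _ ≤ (s + 1) * ((s * u ^ (s - 1) * (u - v)) * (u - v)) :=
          mul_le_mul_of_nonneg_left (mul_le_mul_of_nonneg_right h2 huv0) (by linarith)
      _ = (s + 1) * s * (u - v) ^ 2 * u ^ (s - 1) := by ring
      _ ≤ (s + 1) * s * (u - v) ^ 2 * (2 ^ s * v ^ (s - 1)) :=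
          mul_le_mul_of_nonneg_left h3 (by positivity)
      _ = (s + 1) * s * 2 ^ s * v ^ (s - 1) * (u - v) ^ 2 := by ring
  · -- u ≤ v
    have h1 := bern (s + 1) hs1 hu hv.le
    rw [e] at h1
    have h2 := rpow_sub_rpow_le' hs hu.le h hv
    have hvu0 : 0 ≤ v - u := by linarith
    have h2s : (1:ℝ) ≤ 2 ^ s := Real.one_le_rpow (by norm_num) (by linarith)
    calc u ^ (s + 1) - v ^ (s + 1) - (s + 1) * v ^ s * (u - v)
        ≤ (s + 1) * u ^ s * (u - v) - (s + 1) * v ^ s * (u - v) := by linarith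
      _ = (s + 1) * ((v ^ s - u ^ s) * (v - u)) := by ring
      _ ≤ (s + 1) * ((s * v ^ (s - 1) * (v - u)) * (v - u)) :=
          mul_le_mul_of_nonneg_left (mul_le_mul_of_nonneg_right h2 hvu0) (by linarith)
      _ = ((s + 1) * s * v ^ (s - 1) * (u - v) ^ 2) * 1 := by ring
      _ ≤ ((s + 1) * s * v ^ (s - 1) * (u - v) ^ 2) * 2 ^ s :=
          mul_le_mul_of_nonneg_left h2s (by positivity)
      _ = (s + 1) * s * 2 ^ s * v ^ (s - 1) * (u - v) ^ 2 := by ring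

lemma case1 (s : ℝ) (hs : 1 ≤ s) (a b : ℝ) (h : |b| ≤ |a|) :
    |(|a + b| ^ s * (a + b) * b - |a| ^ s * a * b - |b| ^ s * b ^ 2 - (s + 1) * a * |b| ^ s * b)|
      ≤ ((s + 1) * 2 ^ s + 1) * (|a| ^ s * b ^ 2) + (s + 1) * (a ^ 2 * |b| ^ s) := by
  have hbs : (0:ℝ) ≤ |b| ^ s := by positivity
  have has : (0:ℝ) ≤ |a| ^ s := by positivity
  -- triangle inequality split
  have habs : |(|a + b| ^ s * (a + b) * b - |a| ^ s * a * b - |b| ^ s * b ^ 2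
        - (s + 1) * a * |b| ^ s * b)|
      ≤ |b * (|a + b| ^ s * (a + b) - |a| ^ s * a)| + |b * (|b| ^ s * b)|
        + |(s + 1) * a * |b| ^ s * b| := by
    have ee : |a + b| ^ s * (a + b) * b - |a| ^ s * a * b - |b| ^ s * b ^ 2
        - (s + 1) * a * |b| ^ s * b
        = b * (|a + b| ^ s * (a + b) - |a| ^ s * a) + (-(b * (|b| ^ s * b)))
          + (-((s + 1) * a * |b| ^ s * b)) := by ring
    rw [ee]
    exact (abs_add_three _ _ _).trans (by rw [abs_neg, abs_neg])
  -- term 1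
  have h1 : |b * (|a + b| ^ s * (a + b) - |a| ^ s * a)| ≤ (s + 1) * 2 ^ s * (|a| ^ s * b ^ 2) := by
    rw [abs_mul]
    have l1 := lip s hs (a + b) a
    have hMle : max |a + b| |a| ≤ 2 * |a| := by
      refine max_le ?_ (by linarith [abs_nonneg a])
      calc |a + b| ≤ |a| + |b| := abs_add_le a b
        _ ≤ 2 * |a| := by linarith
    have hM : (max |a + b| |a|) ^ s ≤ 2 ^ s * |a| ^ s := by
      calc (max |a + b| |a|) ^ s ≤ (2 * |a|) ^ s :=
            Real.rpow_le_rpow (le_max_right _ _ |>.trans' (abs_nonneg a)) hMle (by linarith)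
        _ = 2 ^ s * |a| ^ s := Real.mul_rpow (by norm_num) (abs_nonneg a)
    have e5 : a + b - a = b := by ring
    rw [e5] at l1
    calc |b| * |(|a + b| ^ s * (a + b) - |a| ^ s * a)|
        ≤ |b| * ((s + 1) * (max |a + b| |a|) ^ s * |b|) :=
          mul_le_mul_of_nonneg_left l1 (abs_nonneg b)
      _ ≤ |b| * ((s + 1) * (2 ^ s * |a| ^ s) * |b|) := by
          have : (s + 1) * (max |a + b| |a|) ^ s * |b| ≤ (s + 1) * (2 ^ s * |a| ^ s) * |b| :=
            mul_le_mul_of_nonneg_right (mul_le_mul_of_nonneg_left hM (by linarith)) (abs_nonneg b)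
          exact mul_le_mul_of_nonneg_left this (abs_nonneg b)
      _ = (s + 1) * 2 ^ s * (|a| ^ s * (|b| * |b|)) := by ring
      _ = (s + 1) * 2 ^ s * (|a| ^ s * b ^ 2) := by rw [abs_mul_abs_self]; ring_nf
  -- term 2
  have h2 : |b * (|b| ^ s * b)| ≤ |a| ^ s * b ^ 2 := by
    have e0 : |b * (|b| ^ s * b)| = |b| ^ s * (|b| * |b|) := by
      rw [abs_mul, abs_mul, abs_of_nonneg hbs]; ring
    rw [e0, abs_mul_abs_self, ← pow_two]
    have := Real.rpow_le_rpow (abs_nonneg b) h (by linarith : (0:ℝ) ≤ s)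
    exact mul_le_mul_of_nonneg_right this (sq_nonneg b)
  -- term 3
  have h3 : |(s + 1) * a * |b| ^ s * b| ≤ (s + 1) * (a ^ 2 * |b| ^ s) := by
    have e : |(s + 1) * a * |b| ^ s * b| = (s + 1) * (|a| * |b| * |b| ^ s) := by
      rw [abs_mul, abs_mul, abs_mul, abs_of_nonneg (by linarith : (0:ℝ) ≤ s + 1),
        abs_of_nonneg hbs]
      ring
    rw [e]
    have : |a| * |b| ≤ a ^ 2 := by
      calc |a| * |b| ≤ |a| * |a| := mul_le_mul_of_nonneg_left h (abs_nonneg a)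
        _ = a ^ 2 := by rw [abs_mul_abs_self]; ring
    have := mul_le_mul_of_nonneg_right this hbs
    exact mul_le_mul_of_nonneg_left this (by linarith)
  nlinarith [habs, h1, h2, h3]

lemma case2 (s : ℝ) (hs : 1 ≤ s) (a b : ℝ) (hb : 0 < b) (ha : |a| < b) :
    |(|a + b| ^ s * (a + b) * b - |a| ^ s * a * b - |b| ^ s * b ^ 2 - (s + 1) * a * |b| ^ s * b)|
      ≤ ((s + 1) * s * 2 ^ s + 1) * (a ^ 2 * b ^ s) := by
  have hu : 0 < a + b := by have := neg_abs_le a; linarith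
  have hbb : |b| = b := abs_of_pos hb
  have hab : |a + b| = a + b := abs_of_pos hu
  rw [hbb, hab]
  have e : (a + b) ^ s * (a + b) * b - |a| ^ s * a * b - b ^ s * b ^ 2 - (s + 1) * a * b ^ s * b
      = b * (((a + b) ^ (s + 1) - b ^ (s + 1) - (s + 1) * b ^ s * ((a + b) - b))
          - |a| ^ s * a) := by
    rw [Real.rpow_add_one hu.ne', Real.rpow_add_one hb.ne']; ring
  rw [e, abs_mul, abs_of_pos hb]
  have hK := key2 s hs hu hb (by linarith [le_abs_self a] : a + b ≤ 2 * b)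
  rw [show a + b - b = a by ring] at hK ⊢
  have hsig : |(|a| ^ s * a)| ≤ b ^ (s - 1) * a ^ 2 := by
    rcases eq_or_ne a 0 with rfl | ha0
    · simp
    · have haa : 0 < |a| := abs_pos.mpr ha0
      have e1 : |a| ^ s = |a| ^ (s - 1) * |a| := by
        rw [← Real.rpow_add_one haa.ne']; ring_nf
      have e2 : |(|a| ^ s * a)| = |a| ^ (s - 1) * a ^ 2 := by
        rw [abs_mul, abs_of_nonneg (by positivity : (0:ℝ) ≤ |a| ^ s), e1,
          mul_assoc, abs_mul_abs_self, ← pow_two]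
      rw [e2]
      exact mul_le_mul_of_nonneg_right
        (Real.rpow_le_rpow (abs_nonneg a) ha.le (by linarith)) (sq_nonneg a)
  have eb : b ^ (s - 1) * b = b ^ s := by rw [← Real.rpow_add_one hb.ne']; ring_nf
  have tri : |((a + b) ^ (s + 1) - b ^ (s + 1) - (s + 1) * b ^ s * a) - |a| ^ s * a|
      ≤ |(a + b) ^ (s + 1) - b ^ (s + 1) - (s + 1) * b ^ s * a| + |(|a| ^ s * a)| :=
    abs_sub _ _
  calc b * |((a + b) ^ (s + 1) - b ^ (s + 1) - (s + 1) * b ^ s * a) - |a| ^ s * a|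
      ≤ b * ((s + 1) * s * 2 ^ s * b ^ (s - 1) * a ^ 2 + b ^ (s - 1) * a ^ 2) :=
        mul_le_mul_of_nonneg_left (tri.trans (add_le_add hK hsig)) hb.le
    _ = ((s + 1) * s * 2 ^ s + 1) * (a ^ 2 * (b ^ (s - 1) * b)) := by ring
    _ = ((s + 1) * s * 2 ^ s + 1) * (a ^ 2 * b ^ s) := by rw [eb]

/-- Symbol estimate for the commutator `P_s`: for `s ≥ 1` there is `C = C(s)` with
`||ξ|^s ξη − |ξ−η|^s(ξ−η)η − |η|^s η² − (s+1)(ξ−η)|η|^s η| ≤ C(|ξ−η|^s η² + |ξ−η|²|η|^s)`. -/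
theorem stmt7 (s : ℝ) (hs : 1 ≤ s) :
    ∃ C > (0 : ℝ), ∀ ξ η : ℤ,
      |(|(ξ : ℝ)| ^ s * (ξ : ℝ) * (η : ℝ))
          - (|(ξ : ℝ) - (η : ℝ)| ^ s * ((ξ : ℝ) - (η : ℝ)) * (η : ℝ))
          - (|(η : ℝ)| ^ s * (η : ℝ) ^ 2)
          - (s + 1) * ((ξ : ℝ) - (η : ℝ)) * |(η : ℝ)| ^ s * (η : ℝ)|
        ≤ C * (|(ξ : ℝ) - (η : ℝ)| ^ s * (η : ℝ) ^ 2
            + |(ξ : ℝ) - (η : ℝ)| ^ (2 : ℕ) * |(η : ℝ)| ^ s) := by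
  have h2s : (1:ℝ) ≤ 2 ^ s := Real.one_le_rpow (by norm_num) (by linarith)
  refine ⟨(s + 1) * (s + 1) * 2 ^ s * 4 + 4, by positivity, ?_⟩
  set C : ℝ := (s + 1) * (s + 1) * 2 ^ s * 4 + 4 with hC
  have hC0 : 0 ≤ C := by positivity
  have hK1 : (s + 1) * 2 ^ s + 1 ≤ C := by nlinarith
  have hK2 : s + 1 ≤ C := by nlinarith
  have hK3 : (s + 1) * s * 2 ^ s + 1 ≤ C := by nlinarith
  intro ξ η
  set a : ℝ := (ξ : ℝ) - (η : ℝ) with ha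
  set b : ℝ := (η : ℝ) with hb
  have hx : (ξ : ℝ) = a + b := by rw [ha]; ring
  rw [hx, sq_abs]
  rcases le_or_gt |b| |a| with h | h
  · have hc := case1 s hs a b h
    have hX : (0:ℝ) ≤ |a| ^ s * b ^ 2 := by positivity
    have hY : (0:ℝ) ≤ a ^ 2 * |b| ^ s := by positivity
    calc |(|a + b| ^ s * (a + b) * b - |a| ^ s * a * b - |b| ^ s * b ^ 2
          - (s + 1) * a * |b| ^ s * b)|
        ≤ ((s + 1) * 2 ^ s + 1) * (|a| ^ s * b ^ 2) + (s + 1) * (a ^ 2 * |b| ^ s) := hc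
      _ ≤ C * (|a| ^ s * b ^ 2) + C * (a ^ 2 * |b| ^ s) :=
          add_le_add (mul_le_mul_of_nonneg_right hK1 hX) (mul_le_mul_of_nonneg_right hK2 hY)
      _ = C * (|a| ^ s * b ^ 2 + a ^ 2 * |b| ^ s) := by ring
  · have hb0 : b ≠ 0 := by
      intro h0; rw [h0, abs_zero] at h; exact (abs_nonneg a).not_gt h
    have hX : (0:ℝ) ≤ |a| ^ s * b ^ 2 := by positivity
    rcases hb0.lt_or_gt with hbneg | hbpos
    · -- b < 0 : use symmetry
      have hb' : 0 < -b := by linarith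
      have ha' : |(-a)| < -b := by rw [abs_neg]; rwa [abs_of_neg hbneg] at h
      have hc := case2 s hs (-a) (-b) hb' ha'
      rw [show -a + -b = -(a + b) by ring, abs_neg, abs_neg, abs_neg] at hc
      rw [show |a + b| ^ s * -(a + b) * -b - |a| ^ s * -a * -b - |b| ^ s * (-b) ^ 2
            - (s + 1) * -a * |b| ^ s * -b
          = |a + b| ^ s * (a + b) * b - |a| ^ s * a * b - |b| ^ s * b ^ 2
            - (s + 1) * a * |b| ^ s * b by ring] at hc
      rw [show -b = |b| from (abs_of_neg hbneg).symm, neg_sq] at hc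
      calc |(|a + b| ^ s * (a + b) * b - |a| ^ s * a * b - |b| ^ s * b ^ 2
            - (s + 1) * a * |b| ^ s * b)|
          ≤ ((s + 1) * s * 2 ^ s + 1) * (a ^ 2 * |b| ^ s) := hc
        _ ≤ C * (a ^ 2 * |b| ^ s) := mul_le_mul_of_nonneg_right hK3 (by positivity)
        _ ≤ C * (|a| ^ s * b ^ 2 + a ^ 2 * |b| ^ s) :=
            mul_le_mul_of_nonneg_left (le_add_of_nonneg_left hX) hC0
    · -- b > 0
      have hc := case2 s hs a b hbpos (by rwa [abs_of_pos hbpos] at h)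
      rw [show b ^ s = |b| ^ s by rw [abs_of_pos hbpos]] at hc
      calc |(|a + b| ^ s * (a + b) * b - |a| ^ s * a * b - |b| ^ s * b ^ 2
            - (s + 1) * a * |b| ^ s * b)|
          ≤ ((s + 1) * s * 2 ^ s + 1) * (a ^ 2 * |b| ^ s) := hc
        _ ≤ C * (a ^ 2 * |b| ^ s) := mul_le_mul_of_nonneg_right hK3 (by positivity)
        _ ≤ C * (|a| ^ s * b ^ 2 + a ^ 2 * |b| ^ s) :=
            mul_le_mul_of_nonneg_left (le_add_of_nonneg_left hX) hC0
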